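/- arXiv:1903.05486 — 4 statements merged into one kernel-verified Lean document; each statement's English description precedes it below -/
import Mathlib

section
/- Let M be an m×m row stochastic matrix whose transpose has a strongly connected graph (i.e., M is irreducible). Then there exists a diagonal matrix Π with positive diagonal entries such that L = Π − M' Π M is positive semidefinite and L𝟏 = 0, where 𝟏 is the all-ones vector. -/
/-!
Since `M 𝟏 = 𝟏`, the matrix `M` also has a nonzero left fixed vector `v`. Its absolute value
`|v|` is subinvariant, `|v| ≤ |v| M`, and both sides have the same sum, so `|v|` is a nonnegative
left fixed vector; irreducibility spreads positivity of one entry to all of them. For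
`π := |v|`, Jensen's inequality `(M x)ᵢ² ≤ (M x²)ᵢ` gives
`xᵀ L x = π ⬝ x² - π ⬝ (M x)² ≥ π ⬝ x² - π M ⬝ x² = 0`, and `L 𝟏 = π - Mᵀ π = 0`.
-/

namespace Matrix

variable {n : Type*} [Fintype n]

section Field

variable {K : Type*} [Field K] [DecidableEq n]

theorem exists_ne_zero_vecMul_eq_self_of_mulVec_eq_self {M : Matrix n n K} {w : n → K}
    (hw : w ≠ 0) (hMw : M *ᵥ w = w) : ∃ v ≠ 0, v ᵥ* M = v := by
  have hdet : (M - 1).det = 0 :=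
    exists_mulVec_eq_zero_iff.1 ⟨w, hw, by rw [sub_mulVec, one_mulVec, hMw, sub_self]⟩
  obtain ⟨v, hv, hvM⟩ := exists_vecMul_eq_zero_iff.2 hdet
  exact ⟨v, hv, by rwa [vecMul_sub, vecMul_one, sub_eq_zero] at hvM⟩

end Field

variable {M : Matrix n n ℝ}

theorem mulVec_one_of_sum_eq_one (hrow : ∀ i, ∑ j, M i j = 1) : M *ᵥ 1 = 1 := by
  ext i
  simp [mulVec, dotProduct, hrow i]

theorem sum_vecMul_of_sum_eq_one (hrow : ∀ i, ∑ j, M i j = 1) (v : n → ℝ) :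
    ∑ j, (v ᵥ* M) j = ∑ i, v i := by
  simpa [dotProduct_one, mulVec_one_of_sum_eq_one hrow] using (dotProduct_mulVec v M 1).symm

theorem abs_vecMul_eq_abs (hM : ∀ i j, 0 ≤ M i j) (hrow : ∀ i, ∑ j, M i j = 1) {v : n → ℝ}
    (hv : v ᵥ* M = v) : |v| ᵥ* M = |v| := by
  have hle : ∀ j, |v j| ≤ (|v| ᵥ* M) j := fun j => by
    calc |v j| = |∑ i, v i * M i j| := by rw [← congrFun hv j]; rfl
      _ ≤ ∑ i, |v i * M i j| := Finset.abs_sum_le_sum_abs _ _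
      _ = (|v| ᵥ* M) j := by simp [vecMul, dotProduct, abs_mul, abs_of_nonneg (hM _ j)]
  have hsum : ∑ j, |v j| = ∑ j, (|v| ᵥ* M) j := by
    simp only [sum_vecMul_of_sum_eq_one hrow, Pi.abs_apply]
  funext j
  exact ((Finset.sum_eq_sum_iff_of_le fun j _ => hle j).1 hsum j (Finset.mem_univ j)).symm

theorem pos_of_transGen_of_vecMul_eq_self (hM : ∀ i j, 0 ≤ M i j) {a : n → ℝ} (ha : 0 ≤ a)
    (haM : a ᵥ* M = a) {i j : n} (hij : Relation.TransGen (fun p q => Mᵀ p q ≠ 0) i j)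
    (hj : 0 < a j) : 0 < a i := by
  have step : ∀ p q, Mᵀ p q ≠ 0 → 0 < a q → 0 < a p := fun p q hqp hq => by
    have hterm : a q * M q p ≤ (a ᵥ* M) p :=
      Finset.single_le_sum (f := fun r => a r * M r p)
        (fun r _ => mul_nonneg (ha r) (hM r p)) (Finset.mem_univ q)
    rw [haM] at hterm
    exact hterm.trans_lt' (mul_pos hq ((hM q p).lt_of_ne (Ne.symm hqp)))
  induction hij with
  | single h => exact step _ _ h hj
  | tail _ h ih => exact ih (step _ _ h hj)

theorem sq_mulVec_le_mulVec_sq (hM : ∀ i j, 0 ≤ M i j) (hrow : ∀ i, ∑ j, M i j = 1)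
    (x : n → ℝ) : (M *ᵥ x) ^ 2 ≤ M *ᵥ x ^ 2 := fun i =>
  (even_two.convexOn_pow (𝕜 := ℝ)).map_sum_le (fun j _ => hM i j) (hrow i)
    (fun j _ => Set.mem_univ (x j))

variable [DecidableEq n]

theorem exists_pos_vecMul_eq_self (hM : ∀ i j, 0 ≤ M i j) (hrow : ∀ i, ∑ j, M i j = 1)
    (hconn : ∀ i j, Relation.TransGen (fun p q => Mᵀ p q ≠ 0) i j) :
    ∃ pi : n → ℝ, (∀ i, 0 < pi i) ∧ pi ᵥ* M = pi := by
  cases isEmpty_or_nonempty n with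
  | inl _ => exact ⟨0, isEmptyElim, Subsingleton.elim _ _⟩
  | inr hn =>
    obtain ⟨v, hv, hvM⟩ := exists_ne_zero_vecMul_eq_self_of_mulVec_eq_self one_ne_zero
      (mulVec_one_of_sum_eq_one hrow)
    obtain ⟨j, hj⟩ : ∃ j, v j ≠ 0 := Function.ne_iff.1 hv
    exact ⟨|v|, fun i => pos_of_transGen_of_vecMul_eq_self hM (abs_nonneg v)
      (abs_vecMul_eq_abs hM hrow hvM) (hconn i j) (abs_pos.2 hj),
      abs_vecMul_eq_abs hM hrow hvM⟩

theorem dotProduct_diagonal_mulVec (d x y : n → ℝ) : x ⬝ᵥ (diagonal d *ᵥ y) = d ⬝ᵥ (x * y) := by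
  simp only [dotProduct, mulVec_diagonal, Pi.mul_apply]
  exact Finset.sum_congr rfl fun i _ => by ring

theorem posSemidef_diagonal_sub_transpose_mul_diagonal_mul (hM : ∀ i j, 0 ≤ M i j)
    (hrow : ∀ i, ∑ j, M i j = 1) {pi : n → ℝ} (hpi : 0 ≤ pi) (hpiM : pi ᵥ* M = pi) :
    (diagonal pi - Mᵀ * diagonal pi * M).PosSemidef := by
  refine .of_dotProduct_mulVec_nonneg ?_ fun x => ?_
  · rw [← conjTranspose_eq_transpose_of_trivial]
    exact (isHermitian_diagonal pi).sub
      (isHermitian_conjTranspose_mul_mul M (isHermitian_diagonal pi))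
  · have hquad : star x ⬝ᵥ ((diagonal pi - Mᵀ * diagonal pi * M) *ᵥ x)
        = pi ⬝ᵥ x ^ 2 - pi ⬝ᵥ (M *ᵥ x) ^ 2 := by
      rw [star_trivial, sub_mulVec, dotProduct_sub, ← mulVec_mulVec, ← mulVec_mulVec,
        dotProduct_mulVec x Mᵀ, vecMul_transpose, dotProduct_diagonal_mulVec,
        dotProduct_diagonal_mulVec, sq, sq]
    have hjensen : pi ⬝ᵥ (M *ᵥ x) ^ 2 ≤ pi ⬝ᵥ x ^ 2 :=
      calc pi ⬝ᵥ (M *ᵥ x) ^ 2 ≤ pi ⬝ᵥ (M *ᵥ x ^ 2) :=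
            dotProduct_le_dotProduct_of_nonneg_left (sq_mulVec_le_mulVec_sq hM hrow x) hpi
        _ = pi ⬝ᵥ x ^ 2 := by rw [dotProduct_mulVec, hpiM]
    rw [hquad]
    exact sub_nonneg.2 hjensen

theorem diagonal_sub_transpose_mul_diagonal_mul_mulVec_one (hrow : ∀ i, ∑ j, M i j = 1)
    {pi : n → ℝ} (hpiM : pi ᵥ* M = pi) : (diagonal pi - Mᵀ * diagonal pi * M) *ᵥ 1 = 0 := by
  have hdiag : diagonal pi *ᵥ 1 = pi := funext fun i => by simp [mulVec_diagonal]
  rw [sub_mulVec, ← mulVec_mulVec, ← mulVec_mulVec, mulVec_one_of_sum_eq_one hrow, hdiag,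
    mulVec_transpose, hpiM, sub_self]

end Matrix

open Matrix in
/-- Lemma 1, first part: for a row stochastic matrix `M` whose transpose has a
strongly connected graph, there is a positive diagonal matrix `Π` such that
`L = Π − MᵀΠM` is positive semidefinite and `L 𝟏 = 0`. -/
theorem stmt5 {m : ℕ} (M : Matrix (Fin m) (Fin m) ℝ)
    (hnonneg : ∀ i j, 0 ≤ M i j)
    (hrow : ∀ i, ∑ j, M i j = 1)
    (hconn : ∀ i j : Fin m, Relation.TransGen (fun a b => M.transpose a b ≠ 0) i j) :
    ∃ pi : Fin m → ℝ, (∀ i, 0 < pi i) ∧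
      (Matrix.diagonal pi - M.transpose * Matrix.diagonal pi * M).PosSemidef ∧
      (Matrix.diagonal pi - M.transpose * Matrix.diagonal pi * M).mulVec
        (fun _ => 1) = 0 := by
  obtain ⟨pi, hpi, hpiM⟩ := exists_pos_vecMul_eq_self hnonneg hrow hconn
  exact ⟨pi, hpi,
    posSemidef_diagonal_sub_transpose_mul_diagonal_mul hnonneg hrow (fun i => (hpi i).le) hpiM,
    diagonal_sub_transpose_mul_diagonal_mul_mulVec_one hrow hpiM⟩
end

section
/- Let M be an m×m irreducible row stochastic matrix with all diagonal entries positive, and let Π be the diagonal matrix whose diagonal is the (normalized) positive left Perron vector π of M (M'π = π). Then the kernel of L = Π − M'ΠM is one-dimensional, spanned by the all-ones vector. -/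
/-!
Write `y = M x`. Using `Mᵀπ = π` and the unit row sums, the quadratic form of `L` is a
`π`-weighted sum of the variances of `x` under the rows of `M`:
`xᵀ L x = ∑ₖ πₖ ∑ⱼ Mₖⱼ (xⱼ - yₖ)²`.
If `L x = 0` every term vanishes, so `xⱼ = yₖ` whenever `Mₖⱼ ≠ 0`; taking `j = k` (positive
diagonal) gives `xⱼ = xₖ` along every edge of the graph of `M`, and irreducibility makes `x`
constant. Conversely `L 𝟏 = π - Mᵀπ = 0`.
-/

open Matrix Finset

variable {ι R : Type*}

theorem Relation.TransGen.apply_eq {α β : Type*} {r : α → α → Prop} {f : α → β}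
    (hf : ∀ a b, r a b → f a = f b) {a b : α} (hab : Relation.TransGen r a b) : f a = f b := by
  induction hab with
  | single h => exact hf _ _ h
  | tail _ h ih => exact ih.trans (hf _ _ h)

theorem mem_span_one_of_forall_eq [Semiring R] {x : ι → R} (hx : ∀ i j, x i = x j) :
    x ∈ Submodule.span R {(fun _ => 1 : ι → R)} := by
  rw [Submodule.mem_span_singleton]
  rcases isEmpty_or_nonempty ι with _ | ⟨⟨i₀⟩⟩
  · exact ⟨0, Subsingleton.elim _ _⟩
  · exact ⟨x i₀, funext fun j => by simp [hx i₀ j]⟩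

variable [Fintype ι]

theorem sum_mul_sub_sq_eq_of_sum_eq_one [CommRing R] {w : ι → R} (hw : ∑ j, w j = 1)
    (x : ι → R) :
    ∑ j, w j * (x j - ∑ i, w i * x i) ^ 2 = ∑ j, w j * x j ^ 2 - (∑ i, w i * x i) ^ 2 := by
  set c := ∑ i, w i * x i
  calc ∑ j, w j * (x j - c) ^ 2
        = ∑ j, w j * x j ^ 2 - 2 * c * ∑ j, w j * x j + c ^ 2 * ∑ j, w j := by
        simp only [mul_sum, ← sum_sub_distrib, ← sum_add_distrib]
        exact sum_congr rfl fun j _ => by ring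
    _ = ∑ j, w j * x j ^ 2 - c ^ 2 := by rw [hw]; ring

variable [DecidableEq ι]

theorem dotProduct_diagonal_sub_mulVec_eq_sum_variance [CommRing R] {M : Matrix ι ι R}
    {π : ι → R} (hrow : ∀ i, ∑ j, M i j = 1) (hπ : Mᵀ *ᵥ π = π) (x : ι → R) :
    x ⬝ᵥ ((diagonal π - Mᵀ * diagonal π * M) *ᵥ x) =
      ∑ k, π k * ∑ j, M k j * (x j - (M *ᵥ x) k) ^ 2 := by
  have hdiag : ∀ v : ι → R, v ⬝ᵥ (diagonal π *ᵥ v) = ∑ j, π j * v j ^ 2 := fun v =>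
    sum_congr rfl fun j _ => by rw [mulVec_diagonal]; ring
  have hstat : ∑ j, π j * x j ^ 2 = ∑ k, π k * ∑ j, M k j * x j ^ 2 := by
    conv_lhs => rw [← hπ]
    simp only [mulVec, dotProduct, transpose_apply, sum_mul, mul_sum]
    rw [sum_comm]
    exact sum_congr rfl fun k _ => sum_congr rfl fun j _ => by ring
  rw [sub_mulVec, dotProduct_sub, ← mulVec_mulVec, ← mulVec_mulVec, dotProduct_mulVec x Mᵀ,
    vecMul_transpose, hdiag, hdiag, hstat, ← sum_sub_distrib]
  refine sum_congr rfl fun k _ => ?_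
  rw [show (M *ᵥ x) k = ∑ j, M k j * x j from rfl, sum_mul_sub_sq_eq_of_sum_eq_one (hrow k)]
  ring

theorem mulVec_diagonal_sub_mulVec_one [CommRing R] {M : Matrix ι ι R} {π : ι → R}
    (hrow : ∀ i, ∑ j, M i j = 1) (hπ : Mᵀ *ᵥ π = π) :
    (diagonal π - Mᵀ * diagonal π * M) *ᵥ (fun _ => 1) = 0 := by
  have hM : M *ᵥ (fun _ => 1) = fun _ => 1 :=
    funext fun i => by simp [mulVec, dotProduct, hrow i]
  have hD : diagonal π *ᵥ (fun _ => 1) = π := funext fun i => by simp [mulVec_diagonal]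
  rw [sub_mulVec, ← mulVec_mulVec, ← mulVec_mulVec, hM, hD, hπ, sub_self]

theorem eq_mulVec_apply_of_mulVec_diagonal_sub_eq_zero [Field R] [LinearOrder R]
    [IsStrictOrderedRing R] {M : Matrix ι ι R} {π : ι → R}
    (hnonneg : ∀ i j, 0 ≤ M i j) (hrow : ∀ i, ∑ j, M i j = 1) (hpos : ∀ i, 0 < π i)
    (hπ : Mᵀ *ᵥ π = π) {x : ι → R} (hx : (diagonal π - Mᵀ * diagonal π * M) *ᵥ x = 0)
    {k j : ι} (hkj : M k j ≠ 0) : x j = (M *ᵥ x) k := by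
  have hzero := dotProduct_diagonal_sub_mulVec_eq_sum_variance hrow hπ x
  rw [hx, dotProduct_zero, eq_comm] at hzero
  have hrow_nonneg : ∀ k, 0 ≤ ∑ j, M k j * (x j - (M *ᵥ x) k) ^ 2 := fun k =>
    sum_nonneg fun j _ => mul_nonneg (hnonneg k j) (sq_nonneg _)
  have hk := (sum_eq_zero_iff_of_nonneg fun k _ => mul_nonneg (hpos k).le (hrow_nonneg k)).mp
    hzero k (mem_univ k)
  have hterm := (sum_eq_zero_iff_of_nonneg fun j _ => mul_nonneg (hnonneg k j) (sq_nonneg _)).mp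
    ((mul_eq_zero.mp hk).resolve_left (hpos k).ne') j (mem_univ j)
  exact sub_eq_zero.mp (pow_eq_zero_iff two_ne_zero |>.mp
    ((mul_eq_zero.mp hterm).resolve_left hkj))

theorem stmt6_general {m : ℕ} (M : Matrix (Fin m) (Fin m) ℝ)
    (hnonneg : ∀ i j, 0 ≤ M i j)
    (hrow : ∀ i, ∑ j, M i j = 1)
    (hconn : ∀ i j : Fin m, Relation.TransGen (fun a b => M a b ≠ 0) i j)
    (hdiag : ∀ i, 0 < M i i)
    (pi : Fin m → ℝ) (hpos : ∀ i, 0 < pi i)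
    (hPerron : M.transpose.mulVec pi = pi)
    (L : Matrix (Fin m) (Fin m) ℝ)
    (hL : L = Matrix.diagonal pi - M.transpose * Matrix.diagonal pi * M) :
    LinearMap.ker L.mulVecLin =
      Submodule.span ℝ {(fun _ => 1 : Fin m → ℝ)} := by
  subst hL
  refine le_antisymm (fun x hx => ?_) ?_
  · rw [LinearMap.mem_ker, mulVecLin_apply] at hx
    have hedge : ∀ k j, M k j ≠ 0 → x k = x j := fun k j hkj => by
      rw [eq_mulVec_apply_of_mulVec_diagonal_sub_eq_zero hnonneg hrow hpos hPerron hx hkj,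
        eq_mulVec_apply_of_mulVec_diagonal_sub_eq_zero hnonneg hrow hpos hPerron hx
          (hdiag k).ne']
    exact mem_span_one_of_forall_eq fun i j => (hconn i j).apply_eq hedge
  · rw [Submodule.span_le, Set.singleton_subset_iff]
    exact mulVec_diagonal_sub_mulVec_one hrow hPerron

/-- Lemma 1, second part: if in addition the diagonal entries of `M` are positive,
then the kernel of `L = Π − MᵀΠM` is one-dimensional, spanned by the ones vector. -/
theorem stmt6 {m : ℕ} (M : Matrix (Fin m) (Fin m) ℝ)
    (hnonneg : ∀ i j, 0 ≤ M i j)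
    (hrow : ∀ i, ∑ j, M i j = 1)
    (hconn : ∀ i j : Fin m, Relation.TransGen (fun a b => M a b ≠ 0) i j)
    (hdiag : ∀ i, 0 < M i i)
    (pi : Fin m → ℝ) (hpos : ∀ i, 0 < pi i) (hsum : ∑ i, pi i = 1)
    (hPerron : M.transpose.mulVec pi = pi)
    (L : Matrix (Fin m) (Fin m) ℝ)
    (hL : L = Matrix.diagonal pi - M.transpose * Matrix.diagonal pi * M) :
    LinearMap.ker L.mulVecLin =
      Submodule.span ℝ {(fun _ => 1 : Fin m → ℝ)} :=
  stmt6_general M hnonneg hrow hconn hdiag pi hpos hPerron L hL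
end

section
/- If M is an m×m irreducible row stochastic matrix with positive diagonal entries and Π = diag(π) with M'π = π, π a positive probability vector, then the matrix I − L with L = Π − M'ΠM is a nonnegative irreducible matrix with row sums equal to 1 and spectral radius 1, and the eigenvalue 1 of I − L has geometric multiplicity one. -/
/-!
Write `I − L = (I − Π) + MᵀΠM`. Both summands are nonnegative because `π ≤ 1`, the row sums are
`1 − π + MᵀΠM𝟏 = 1 − π + Mᵀπ = 1`, and since `M i i > 0` every edge `i → j` of `M` is an edge of
`MᵀΠM`, so `I − L` is an irreducible row-stochastic matrix. For such a matrix Gershgorin's theorem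
bounds the spectrum by `1`, the vector `𝟏` is a fixed vector, and the maximum principle (a fixed
vector is constant along edges leaving a maximum) shows that every fixed vector is constant.
-/

open Finset

namespace Matrix

variable {ι : Type*} [DecidableEq ι]

section RowStochastic

variable [Fintype ι]

theorem one_mem_spectrum_of_mulVec_one {K : Type*} [Field K] [Nonempty ι] {A : Matrix ι ι K}
    (h : A *ᵥ 1 = 1) : (1 : K) ∈ spectrum K A := by
  rw [← spectrum_toLin']
  refine (Module.End.hasEigenvalue_of_hasEigenvector (x := 1) ⟨?_, one_ne_zero⟩).mem_spectrum
  simpa [Module.End.mem_eigenspace_iff] using h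

theorem norm_le_one_of_mem_spectrum_map_of_mem_rowStochastic {A : Matrix ι ι ℝ}
    (hA : A ∈ rowStochastic ℝ ι) {μ : ℂ} (hμ : μ ∈ spectrum ℂ (A.map (algebraMap ℝ ℂ))) :
    ‖μ‖ ≤ 1 := by
  rw [← spectrum_toLin', ← Module.End.hasEigenvalue_iff_mem_spectrum] at hμ
  obtain ⟨k, hk⟩ := eigenvalue_mem_ball hμ
  rw [Metric.mem_closedBall, dist_eq_norm] at hk
  have hnorm : ∀ j, ‖A.map (algebraMap ℝ ℂ) k j‖ = A k j := fun j => by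
    simp [nonneg_of_mem_rowStochastic hA]
  calc ‖μ‖ ≤ ‖A.map (algebraMap ℝ ℂ) k k‖ + ‖μ - A.map (algebraMap ℝ ℂ) k k‖ :=
        norm_le_norm_add_norm_sub' μ _
    _ ≤ ∑ j, ‖A.map (algebraMap ℝ ℂ) k j‖ := by
        rw [← add_sum_erase _ _ (mem_univ k)]; gcongr
    _ = 1 := by simp only [hnorm, sum_row_of_mem_rowStochastic hA]

theorem one_mem_spectrum_map_of_mem_rowStochastic [Nonempty ι] {A : Matrix ι ι ℝ}
    (hA : A ∈ rowStochastic ℝ ι) : (1 : ℂ) ∈ spectrum ℂ (A.map (algebraMap ℝ ℂ)) := by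
  refine one_mem_spectrum_of_mulVec_one (funext fun i => ?_)
  have := RingHom.map_mulVec (algebraMap ℝ ℂ) A 1 i
  rw [one_vecMul_of_mem_rowStochastic hA] at this
  simpa using this.symm

theorem eq_of_mulVec_eq_self_of_le {A : Matrix ι ι ℝ} (hA : A ∈ rowStochastic ℝ ι) {i₀ : ι}
    (hconn : ∀ j, Relation.TransGen (fun a b => A a b ≠ 0) i₀ j) {v : ι → ℝ}
    (hv : A *ᵥ v = v) (hmax : ∀ j, v j ≤ v i₀) (j : ι) : v j = v i₀ := by
  have propagate : ∀ a b, v a = v i₀ → A a b ≠ 0 → v b = v i₀ := by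
    intro a b ha hab
    have hle : ∀ k ∈ univ, A a k * v k ≤ A a k * v i₀ :=
      fun k _ => mul_le_mul_of_nonneg_left (hmax k) (nonneg_of_mem_rowStochastic hA)
    have heq : ∑ k, A a k * v k = ∑ k, A a k * v i₀ := by
      rw [← sum_mul, sum_row_of_mem_rowStochastic hA, one_mul, ← ha]
      exact congrFun hv a
    exact mul_left_cancel₀ hab ((sum_eq_sum_iff_of_le hle).mp heq b (mem_univ b))
  induction hconn j with
  | single h => exact propagate _ _ rfl h
  | tail _ h ih => exact propagate _ _ ih h

theorem ker_sub_one_mulVecLin_eq_span_one {A : Matrix ι ι ℝ} (hA : A ∈ rowStochastic ℝ ι)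
    (hconn : ∀ i j, Relation.TransGen (fun a b => A a b ≠ 0) i j) :
    LinearMap.ker (A - 1).mulVecLin = ℝ ∙ 1 := by
  apply le_antisymm
  · intro v hv
    rw [LinearMap.mem_ker, mulVecLin_apply, sub_mulVec, one_mulVec, sub_eq_zero] at hv
    rcases isEmpty_or_nonempty ι with _ | _
    · simp [Subsingleton.elim v 0]
    obtain ⟨i₀, -, hmax⟩ := exists_max_image univ v univ_nonempty
    have hconst := eq_of_mulVec_eq_self_of_le hA (hconn i₀) hv (fun j => hmax j (mem_univ j))
    refine Submodule.mem_span_singleton.mpr ⟨v i₀, funext fun j => ?_⟩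
    simp [hconst j]
  · rw [Submodule.span_le, Set.singleton_subset_iff, SetLike.mem_coe, LinearMap.mem_ker,
      mulVecLin_apply, sub_mulVec, one_mulVec, one_vecMul_of_mem_rowStochastic hA, sub_self]

theorem finrank_ker_sub_one_mulVecLin [Nonempty ι] {A : Matrix ι ι ℝ}
    (hA : A ∈ rowStochastic ℝ ι)
    (hconn : ∀ i j, Relation.TransGen (fun a b => A a b ≠ 0) i j) :
    Module.finrank ℝ (LinearMap.ker (A - 1).mulVecLin) = 1 := by
  rw [ker_sub_one_mulVecLin_eq_span_one hA hconn]
  exact finrank_span_singleton one_ne_zero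

end RowStochastic

variable {M : Matrix ι ι ℝ} {π : ι → ℝ}

theorem one_sub_diagonal_apply_nonneg (hπ₁ : π ≤ 1) (i j : ι) :
    0 ≤ (1 - diagonal π : Matrix ι ι ℝ) i j := by
  rcases eq_or_ne i j with rfl | hij
  · simpa using hπ₁ i
  · simp [hij]

variable [Fintype ι]

theorem transpose_mul_diagonal_mul_apply (i j : ι) :
    (Mᵀ * diagonal π * M) i j = ∑ k, M k i * π k * M k j := by
  rw [mul_apply]
  simp [mul_diagonal]

theorem le_transpose_mul_diagonal_mul_apply (hM : ∀ i j, 0 ≤ M i j) (hπ : 0 ≤ π) (i j k : ι) :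
    M k i * π k * M k j ≤ (Mᵀ * diagonal π * M) i j := by
  rw [transpose_mul_diagonal_mul_apply]
  exact single_le_sum (f := fun l => M l i * π l * M l j)
    (fun l _ => mul_nonneg (mul_nonneg (hM l i) (hπ l)) (hM l j)) (mem_univ k)

theorem one_sub_diagonal_add_transpose_mul_diagonal_mul_mem_rowStochastic
    (hM : M ∈ rowStochastic ℝ ι) (hπ₀ : 0 ≤ π) (hπ₁ : π ≤ 1) (hfix : Mᵀ *ᵥ π = π) :
    1 - diagonal π + Mᵀ * diagonal π * M ∈ rowStochastic ℝ ι := by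
  refine ⟨fun i j => add_nonneg (one_sub_diagonal_apply_nonneg hπ₁ i j) ?_, ?_⟩
  · exact (le_transpose_mul_diagonal_mul_apply hM.1 hπ₀ i j i).trans'
      (mul_nonneg (mul_nonneg (hM.1 i i) (hπ₀ i)) (hM.1 i j))
  · have hdiag : diagonal π *ᵥ 1 = π := funext fun i => by simp [mulVec_diagonal]
    rw [add_mulVec, sub_mulVec, ← mulVec_mulVec, one_vecMul_of_mem_rowStochastic hM,
      ← mulVec_mulVec, hdiag, hfix, one_mulVec, sub_add_cancel]

theorem one_sub_diagonal_add_transpose_mul_diagonal_mul_apply_pos (hM : ∀ i j, 0 ≤ M i j)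
    (hπ : ∀ k, 0 < π k) (hπ₁ : π ≤ 1) {i j : ι} (hii : 0 < M i i) (hij : 0 < M i j) :
    0 < (1 - diagonal π + Mᵀ * diagonal π * M) i j := by
  refine add_pos_of_nonneg_of_pos (one_sub_diagonal_apply_nonneg hπ₁ i j) ?_
  exact (mul_pos (mul_pos hii (hπ i)) hij).trans_le
    (le_transpose_mul_diagonal_mul_apply hM (fun k => (hπ k).le) i j i)

end Matrix

open Matrix

/-- For `M` irreducible row stochastic with positive diagonal and `Π = diag π`
with `Mᵀπ = π`, the matrix `I − L` (with `L = Π − MᵀΠM`) is nonnegative,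
irreducible, has unit row sums, spectral radius `1`, and the eigenvalue `1`
has geometric multiplicity one. -/
theorem stmt8 {m : ℕ} (M : Matrix (Fin m) (Fin m) ℝ)
    (hnonneg : ∀ i j, 0 ≤ M i j)
    (hrow : ∀ i, ∑ j, M i j = 1)
    (hconn : ∀ i j : Fin m, Relation.TransGen (fun a b => M a b ≠ 0) i j)
    (hdiag : ∀ i, 0 < M i i)
    (pi : Fin m → ℝ) (hpos : ∀ i, 0 < pi i) (hsum : ∑ i, pi i = 1)
    (hPerron : M.transpose.mulVec pi = pi)
    (L : Matrix (Fin m) (Fin m) ℝ)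
    (hL : L = Matrix.diagonal pi - M.transpose * Matrix.diagonal pi * M) :
    (∀ i j, 0 ≤ (1 - L) i j) ∧
    (∀ i j : Fin m, Relation.TransGen (fun a b => (1 - L) a b ≠ 0) i j) ∧
    (∀ i, ∑ j, (1 - L) i j = 1) ∧
    (∀ mu : ℂ, mu ∈ spectrum ℂ ((1 - L).map (algebraMap ℝ ℂ)) → ‖mu‖ ≤ 1) ∧
    (1 : ℂ) ∈ spectrum ℂ ((1 - L).map (algebraMap ℝ ℂ)) ∧
    Module.finrank ℝ (LinearMap.ker ((1 - L) - 1).mulVecLin) = 1 := by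
  subst hL
  have hm : Nonempty (Fin m) := by
    by_contra h
    simp [not_nonempty_iff.mp h] at hsum
  have hπ₀ : 0 ≤ pi := fun i => (hpos i).le
  have hπ₁ : pi ≤ 1 := fun i => (single_le_sum (fun j _ => hπ₀ j) (mem_univ i)).trans_eq hsum
  have hM : M ∈ rowStochastic ℝ (Fin m) := mem_rowStochastic_iff_sum.mpr ⟨hnonneg, hrow⟩
  rw [← sub_add]
  have hA := one_sub_diagonal_add_transpose_mul_diagonal_mul_mem_rowStochastic hM hπ₀ hπ₁ hPerron
  have hconnA : ∀ i j, Relation.TransGen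
      (fun a b => (1 - diagonal pi + Mᵀ * diagonal pi * M) a b ≠ 0) i j := fun i j =>
    Relation.TransGen.mono (fun a b hab =>
      (one_sub_diagonal_add_transpose_mul_diagonal_mul_apply_pos hnonneg hpos hπ₁ (hdiag a)
        ((hnonneg a b).lt_of_ne' hab)).ne') i j (hconn i j)
  exact ⟨hA.1, hconnA, (mem_rowStochastic_iff_sum.mp hA).2,
    fun μ hμ => norm_le_one_of_mem_spectrum_map_of_mem_rowStochastic hA hμ,
    one_mem_spectrum_map_of_mem_rowStochastic hA, finrank_ker_sub_one_mulVecLin hA hconnA⟩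
end

section
/- Let S be an m×m irreducible row stochastic matrix with positive diagonal entries, S̄ = S ⊗ I_n, Π̄ = Π_S ⊗ I_n where Π_S = diag(π) with S'π = π, π a positive probability vector. Let V = blockdiag(V₁,…,V_m) where each V_i ∈ ℝ^{n×n_i} has orthonormal columns, and suppose ⋂_i col(V_i) = 0. Then with R = V'Π̄V and B = V'S̄V, R is positive definite and B'RB − R is negative definite; in particular, B is a discrete-time stability matrix (spectral radius less than 1). -/
/-!
Write `y = V x` and `‖y‖²_π = ∑ᵢ πᵢ ‖yᵢ‖²`, so that `xᵀ R x = ‖y‖²_π` and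
`(B x)ᵀ R (B x) = ‖V Vᵀ S̄ y‖²_π`. The projection `V Vᵀ` acts blockwise, hence commutes with `Π̄`
and does not increase `‖·‖_π`. Stationarity of `π` and Jensen's inequality in each row of `S` give
`‖y‖²_π - ‖S̄ y‖²_π = ∑ᵢ πᵢ ∑ⱼ Sᵢⱼ ‖yⱼ - (S̄ y)ᵢ‖² ≥ 0`. If the total gap vanishes, then
`yⱼ = (S̄ y)ᵢ` whenever `Sᵢⱼ ≠ 0`; with `Sᵢᵢ > 0` and irreducibility all blocks `yᵢ` coincide, and
since `yᵢ = Vᵢ xᵢ` the common block lies in every `col(Vᵢ)`, so it is `0`. Finally, for an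
eigenpair `B v = μ v` over `ℂ`, `v* (R - Bᵀ R B) v = (1 - |μ|²) v* R v`, whence `|μ| < 1`.
-/

open Matrix Finset
open scoped Kronecker

section Stochastic

variable {ι : Type*} [Fintype ι]

theorem sum_mul_sq_eq_sq_add_sum_mul_sq_sub (s z : ι → ℝ) (hs : ∑ j, s j = 1) :
    ∑ j, s j * z j ^ 2 =
      (∑ j, s j * z j) ^ 2 + ∑ j, s j * (z j - ∑ k, s k * z k) ^ 2 := by
  set c := ∑ k, s k * z k
  have expand : ∀ j,
      s j * (z j - c) ^ 2 = s j * z j ^ 2 - 2 * c * (s j * z j) + c ^ 2 * s j :=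
    fun j => by ring
  simp only [expand, sum_add_distrib, sum_sub_distrib, ← mul_sum, hs]
  ring

variable {S : Matrix ι ι ℝ} {π : ι → ℝ}

theorem sum_mul_sq_eq_sum_mul_sq_mulVec_add (hrow : ∀ i, ∑ j, S i j = 1) (hπ : Sᵀ *ᵥ π = π)
    (z : ι → ℝ) :
    ∑ i, π i * z i ^ 2 = ∑ i, π i * (S *ᵥ z) i ^ 2 +
      ∑ i, π i * ∑ j, S i j * (z j - (S *ᵥ z) i) ^ 2 := by
  calc ∑ i, π i * z i ^ 2 = π ⬝ᵥ S *ᵥ fun j => z j ^ 2 := by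
        rw [dotProduct_mulVec, ← mulVec_transpose, hπ]; rfl
    _ = ∑ i, π i * ∑ j, S i j * z j ^ 2 := rfl
    _ = _ := by
        rw [← sum_add_distrib]
        refine sum_congr rfl fun i _ => ?_
        rw [← mul_add, sum_mul_sq_eq_sq_add_sum_mul_sq_sub _ _ (hrow i)]
        rfl

theorem sum_mul_sq_mulVec_le (hnonneg : ∀ i j, 0 ≤ S i j) (hrow : ∀ i, ∑ j, S i j = 1)
    (hπ : Sᵀ *ᵥ π = π) (hπnonneg : ∀ i, 0 ≤ π i) (z : ι → ℝ) :
    ∑ i, π i * (S *ᵥ z) i ^ 2 ≤ ∑ i, π i * z i ^ 2 := by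
  rw [sum_mul_sq_eq_sum_mul_sq_mulVec_add hrow hπ z, le_add_iff_nonneg_right]
  exact sum_nonneg fun i _ => mul_nonneg (hπnonneg i) <|
    sum_nonneg fun j _ => mul_nonneg (hnonneg i j) (sq_nonneg _)

theorem eq_mulVec_apply_of_sum_mul_sq_le (hnonneg : ∀ i j, 0 ≤ S i j)
    (hrow : ∀ i, ∑ j, S i j = 1) (hπ : Sᵀ *ᵥ π = π) (hπpos : ∀ i, 0 < π i) {z : ι → ℝ}
    (hz : ∑ i, π i * z i ^ 2 ≤ ∑ i, π i * (S *ᵥ z) i ^ 2) {i j : ι} (hij : S i j ≠ 0) :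
    z j = (S *ᵥ z) i := by
  have hinner : ∀ i j, 0 ≤ S i j * (z j - (S *ᵥ z) i) ^ 2 :=
    fun i j => mul_nonneg (hnonneg i j) (sq_nonneg _)
  have houter : ∀ i, 0 ≤ π i * ∑ j, S i j * (z j - (S *ᵥ z) i) ^ 2 :=
    fun i => mul_nonneg (hπpos i).le (sum_nonneg fun j _ => hinner i j)
  have hdisp : ∑ i, π i * ∑ j, S i j * (z j - (S *ᵥ z) i) ^ 2 = 0 := by
    have := sum_mul_sq_eq_sum_mul_sq_mulVec_add hrow hπ z
    linarith [sum_nonneg fun i (_ : i ∈ univ) => houter i]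
  have hi := (sum_eq_zero_iff_of_nonneg fun i _ => houter i).1 hdisp i (mem_univ i)
  have hij' := (sum_eq_zero_iff_of_nonneg fun j _ => hinner i j).1
    ((mul_eq_zero.1 hi).resolve_left (hπpos i).ne') j (mem_univ j)
  exact sub_eq_zero.1 <|
    pow_eq_zero_iff two_ne_zero |>.1 ((mul_eq_zero.1 hij').resolve_left hij)

theorem apply_eq_of_sum_mul_sq_le (hnonneg : ∀ i j, 0 ≤ S i j) (hrow : ∀ i, ∑ j, S i j = 1)
    (hπ : Sᵀ *ᵥ π = π) (hπpos : ∀ i, 0 < π i)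
    (hconn : ∀ i j, Relation.TransGen (fun a b => S a b ≠ 0) i j) (hdiag : ∀ i, S i i ≠ 0)
    {z : ι → ℝ} (hz : ∑ i, π i * z i ^ 2 ≤ ∑ i, π i * (S *ᵥ z) i ^ 2) (i j : ι) :
    z i = z j := by
  have hstep : ∀ a b, S a b ≠ 0 → z a = z b := fun a b hab => by
    rw [eq_mulVec_apply_of_sum_mul_sq_le hnonneg hrow hπ hπpos hz (hdiag a),
      eq_mulVec_apply_of_sum_mul_sq_le hnonneg hrow hπ hπpos hz hab]
  simpa [Relation.transGen_eq_self] using (hconn i j).lift z hstep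

end Stochastic

section Kronecker

variable {ι α : Type*} [DecidableEq α]

theorem kronecker_one_mulVec_apply [Fintype ι] [Fintype α] (S : Matrix ι ι ℝ)
    (y : ι × α → ℝ) (i : ι) (a : α) :
    (S ⊗ₖ (1 : Matrix α α ℝ) *ᵥ y) (i, a) = (S *ᵥ fun j => y (j, a)) i := by
  simp only [mulVec, dotProduct, kronecker_apply, one_apply, mul_ite, mul_one, mul_zero,
    ite_mul, zero_mul, Fintype.sum_prod_type, sum_ite_eq, mem_univ, if_true]

variable [DecidableEq ι]

theorem diagonal_kronecker_one (π : ι → ℝ) :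
    diagonal π ⊗ₖ (1 : Matrix α α ℝ) = diagonal fun p => π p.1 := by
  rw [← diagonal_one, diagonal_kronecker_diagonal]
  simp only [mul_one]

theorem dotProduct_diagonal_fst_mulVec [Fintype ι] [Fintype α] (π : ι → ℝ) (y : ι × α → ℝ) :
    y ⬝ᵥ diagonal (fun p => π p.1) *ᵥ y = ∑ a, ∑ i, π i * y (i, a) ^ 2 := by
  simp only [dotProduct, mulVec_diagonal]
  rw [Fintype.sum_prod_type_right]
  exact sum_congr rfl fun a _ => sum_congr rfl fun i _ => by ring

variable [Fintype ι] [Fintype α] {S : Matrix ι ι ℝ} {π : ι → ℝ}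

theorem dotProduct_kronecker_one_mulVec_le (hnonneg : ∀ i j, 0 ≤ S i j)
    (hrow : ∀ i, ∑ j, S i j = 1) (hπ : Sᵀ *ᵥ π = π) (hπnonneg : ∀ i, 0 ≤ π i)
    (y : ι × α → ℝ) :
    S ⊗ₖ (1 : Matrix α α ℝ) *ᵥ y ⬝ᵥ diagonal (fun p => π p.1) *ᵥ
        (S ⊗ₖ (1 : Matrix α α ℝ) *ᵥ y) ≤
      y ⬝ᵥ diagonal (fun p => π p.1) *ᵥ y := by
  simp only [dotProduct_diagonal_fst_mulVec, kronecker_one_mulVec_apply]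
  exact sum_le_sum fun a _ => sum_mul_sq_mulVec_le hnonneg hrow hπ hπnonneg _

theorem apply_eq_of_dotProduct_kronecker_one_mulVec_le (hnonneg : ∀ i j, 0 ≤ S i j)
    (hrow : ∀ i, ∑ j, S i j = 1) (hπ : Sᵀ *ᵥ π = π) (hπpos : ∀ i, 0 < π i)
    (hconn : ∀ i j, Relation.TransGen (fun a b => S a b ≠ 0) i j) (hdiag : ∀ i, S i i ≠ 0)
    {y : ι × α → ℝ} (hy : y ⬝ᵥ diagonal (fun p => π p.1) *ᵥ y ≤
      S ⊗ₖ (1 : Matrix α α ℝ) *ᵥ y ⬝ᵥ diagonal (fun p => π p.1) *ᵥ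
        (S ⊗ₖ (1 : Matrix α α ℝ) *ᵥ y))
    (i j : ι) (a : α) :
    y (i, a) = y (j, a) := by
  simp only [dotProduct_diagonal_fst_mulVec, kronecker_one_mulVec_apply] at hy
  have hcol := (sum_eq_sum_iff_of_le fun a _ =>
    sum_mul_sq_mulVec_le hnonneg hrow hπ (fun i => (hπpos i).le) fun j => y (j, a)).1
    (le_antisymm (sum_le_sum fun a _ =>
      sum_mul_sq_mulVec_le hnonneg hrow hπ (fun i => (hπpos i).le) _) hy)
  exact apply_eq_of_sum_mul_sq_le hnonneg hrow hπ hπpos hconn hdiag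
    (hcol a (mem_univ a)).ge i j

end Kronecker

section BlockDiagonal

variable {ι α R : Type*} {κ : ι → Type*} [DecidableEq ι]

def blockDiagonalProd [Zero R] (W : ∀ i, Matrix α (κ i) R) : Matrix (ι × α) (Σ i, κ i) R :=
  (blockDiagonal' W).submatrix (Equiv.sigmaEquivProd ι α).symm id

theorem blockDiagonalProd_apply [Zero R] (W : ∀ i, Matrix α (κ i) R) (p : ι × α)
    (c : Σ i, κ i) :
    blockDiagonalProd W p c = if p.1 = c.1 then W c.1 p.2 c.2 else 0 := by
  obtain ⟨i, a⟩ := p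
  obtain ⟨j, c⟩ := c
  by_cases h : i = j
  · subst h; simp [blockDiagonalProd, blockDiagonal'_apply_eq]
  · simp [blockDiagonalProd, blockDiagonal'_apply_ne _ _ _ h, h]

theorem blockDiagonalProd_transpose_mul_self [Fintype α] [∀ i, Fintype (κ i)] [Fintype ι]
    [∀ i, DecidableEq (κ i)] [Semiring R] {W : ∀ i, Matrix α (κ i) R}
    (hW : ∀ i, (W i)ᵀ * W i = 1) : (blockDiagonalProd W)ᵀ * blockDiagonalProd W = 1 := by
  rw [blockDiagonalProd, transpose_submatrix, submatrix_mul_equiv, blockDiagonal'_transpose,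
    ← blockDiagonal'_mul]
  simp only [hW, submatrix_id_id]
  exact blockDiagonal'_one

theorem diagonal_fst_mul_blockDiagonalProd [Fintype α] [∀ i, Fintype (κ i)] [Fintype ι]
    [DecidableEq α] [∀ i, DecidableEq (κ i)] [CommSemiring R] (W : ∀ i, Matrix α (κ i) R)
    (d : ι → R) :
    diagonal (fun p : ι × α => d p.1) * blockDiagonalProd W =
      blockDiagonalProd W * diagonal fun c : Σ i, κ i => d c.1 := by
  ext p c
  rw [diagonal_mul, mul_diagonal, blockDiagonalProd_apply]
  split_ifs with h
  · rw [h, mul_comm]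
  · simp

theorem blockDiagonalProd_transpose_mul_diagonal_mul [Fintype α] [∀ i, Fintype (κ i)]
    [Fintype ι] [DecidableEq α] [∀ i, DecidableEq (κ i)] [CommSemiring R]
    {W : ∀ i, Matrix α (κ i) R}
    (hW : ∀ i, (W i)ᵀ * W i = 1) (d : ι → R) :
    (blockDiagonalProd W)ᵀ * diagonal (fun p : ι × α => d p.1) * blockDiagonalProd W =
      diagonal fun c : Σ i, κ i => d c.1 := by
  rw [Matrix.mul_assoc, diagonal_fst_mul_blockDiagonalProd, ← Matrix.mul_assoc,
    blockDiagonalProd_transpose_mul_self hW, Matrix.one_mul]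

theorem blockDiagonalProd_mulVec_apply [Fintype ι] [∀ i, Fintype (κ i)] [CommSemiring R]
    (W : ∀ i, Matrix α (κ i) R) (x : (Σ i, κ i) → R) (i : ι) (a : α) :
    (blockDiagonalProd W *ᵥ x) (i, a) = (W i *ᵥ fun c => x ⟨i, c⟩) a := by
  simp only [mulVec, dotProduct, blockDiagonalProd_apply, ite_mul, zero_mul, Fintype.sum_sigma]
  rw [Fintype.sum_eq_single i fun j hj => by simp [Ne.symm hj]]
  simp

end BlockDiagonal

theorem dotProduct_transpose_mulVec_le {m n : Type*} [Fintype m] [Fintype n] [DecidableEq n]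
    {V : Matrix m n ℝ} {P : Matrix m m ℝ} {D : Matrix n n ℝ} (hV : Vᵀ * V = 1)
    (hP : P.PosSemidef) (hPV : P * V = V * D) (w : m → ℝ) :
    Vᵀ *ᵥ w ⬝ᵥ D *ᵥ (Vᵀ *ᵥ w) ≤ w ⬝ᵥ P *ᵥ w := by
  -- `w = V a + e` with `Vᵀ e = 0`, and `P V = V D` makes the cross terms vanish.
  set a := Vᵀ *ᵥ w
  set e := w - V *ᵥ a
  have he : Vᵀ *ᵥ e = 0 := by
    rw [mulVec_sub, mulVec_mulVec, hV, one_mulVec, sub_self]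
  have hPVa : P *ᵥ (V *ᵥ a) = V *ᵥ (D *ᵥ a) := by rw [mulVec_mulVec, hPV, ← mulVec_mulVec]
  have hcross : e ⬝ᵥ P *ᵥ (V *ᵥ a) = 0 := by
    rw [hPVa, dotProduct_mulVec, ← mulVec_transpose, he, zero_dotProduct]
  have hPt : Pᵀ = P := by
    simpa [conjTranspose_eq_transpose_of_trivial] using hP.isHermitian.eq
  have hdiag : a ⬝ᵥ D *ᵥ a = V *ᵥ a ⬝ᵥ P *ᵥ (V *ᵥ a) := by
    have hDa : D *ᵥ a = Vᵀ *ᵥ (P *ᵥ (V *ᵥ a)) := by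
      rw [hPVa, mulVec_mulVec (D *ᵥ a) Vᵀ V, hV, one_mulVec]
    rw [hDa, dotProduct_mulVec, vecMul_transpose]
  have hsplit : w = V *ᵥ a + e := (add_sub_cancel _ _).symm
  have hee : 0 ≤ e ⬝ᵥ P *ᵥ e := by simpa using hP.dotProduct_mulVec_nonneg e
  have hsym : V *ᵥ a ⬝ᵥ P *ᵥ e = e ⬝ᵥ P *ᵥ (V *ᵥ a) := by
    rw [dotProduct_mulVec, ← mulVec_transpose, hPt, dotProduct_comm]
  calc a ⬝ᵥ D *ᵥ a ≤ a ⬝ᵥ D *ᵥ a + e ⬝ᵥ P *ᵥ e := le_add_of_nonneg_right hee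
    _ = w ⬝ᵥ P *ᵥ w := by
      rw [hsplit, mulVec_add, add_dotProduct, dotProduct_add, dotProduct_add, hsym, hcross,
        hdiag]
      ring

theorem posDef_sub_transpose_mul_mul_of_lt {ι : Type*} [Fintype ι] {R B : Matrix ι ι ℝ}
    (hR : R.IsHermitian) (h : ∀ x, x ≠ 0 → B *ᵥ x ⬝ᵥ R *ᵥ (B *ᵥ x) < x ⬝ᵥ R *ᵥ x) :
    (R - Bᵀ * R * B).PosDef := by
  have hBRB : (Bᵀ * R * B).IsHermitian := by
    simpa [conjTranspose_eq_transpose_of_trivial] using isHermitian_conjTranspose_mul_mul B hR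
  refine .of_dotProduct_mulVec_pos (hR.sub hBRB) fun x hx => ?_
  rw [star_trivial, sub_mulVec, dotProduct_sub, ← mulVec_mulVec, ← mulVec_mulVec,
    dotProduct_mulVec x Bᵀ, vecMul_transpose, sub_pos]
  exact h x hx

section Complexification

variable {ι : Type*} [Fintype ι]

theorem re_star_dotProduct_map_mulVec (G : Matrix ι ι ℝ) (v : ι → ℂ) :
    (star v ⬝ᵥ G.map (algebraMap ℝ ℂ) *ᵥ v).re =
      (fun i => (v i).re) ⬝ᵥ G *ᵥ (fun i => (v i).re) +
        (fun i => (v i).im) ⬝ᵥ G *ᵥ fun i => (v i).im := by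
  simp only [dotProduct, mulVec, map_apply, Pi.star_apply, Complex.re_sum, mul_sum,
    ← sum_add_distrib]
  refine sum_congr rfl fun i _ => sum_congr rfl fun j _ => ?_
  simp only [Complex.mul_re, Complex.mul_im, RCLike.star_def, Complex.conj_re, Complex.conj_im,
    Complex.coe_algebraMap, Complex.ofReal_re, Complex.ofReal_im]
  ring

theorem Matrix.PosDef.re_star_dotProduct_map_mulVec_pos {G : Matrix ι ι ℝ} (hG : G.PosDef)
    {v : ι → ℂ} (hv : v ≠ 0) : 0 < (star v ⬝ᵥ G.map (algebraMap ℝ ℂ) *ᵥ v).re := by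
  rw [re_star_dotProduct_map_mulVec]
  have hre := hG.posSemidef.dotProduct_mulVec_nonneg fun i => (v i).re
  have him := hG.posSemidef.dotProduct_mulVec_nonneg fun i => (v i).im
  simp only [star_trivial] at hre him
  by_cases h : (fun i => (v i).re) = 0
  · have him0 : (fun i => (v i).im) ≠ 0 := fun h' =>
      hv <| funext fun i => Complex.ext (congrFun h i) (congrFun h' i)
    have := hG.dotProduct_mulVec_pos him0
    rw [star_trivial] at this
    linarith
  · have := hG.dotProduct_mulVec_pos h
    rw [star_trivial] at this
    linarith

variable [DecidableEq ι]

theorem norm_lt_one_of_mem_spectrum_of_posDef {R B : Matrix ι ι ℝ} (hR : R.PosDef)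
    (hRB : (R - Bᵀ * R * B).PosDef) {μ : ℂ} (hμ : μ ∈ spectrum ℂ (B.map (algebraMap ℝ ℂ))) :
    ‖μ‖ < 1 := by
  set Bc := B.map (algebraMap ℝ ℂ)
  set Rc := R.map (algebraMap ℝ ℂ)
  rw [← spectrum_toLin', ← Module.End.hasEigenvalue_iff_mem_spectrum] at hμ
  obtain ⟨v, hv⟩ := hμ.exists_hasEigenvector
  have hBv : Bc *ᵥ v = μ • v := by simpa [toLin'_apply] using hv.apply_eq_smul
  have hBc : Bcᴴ = Bcᵀ := by ext i j; simp [Bc]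
  have hmap : (R - Bᵀ * R * B).map (algebraMap ℝ ℂ) = Rc - Bcᴴ * Rc * Bc := by
    rw [hBc, Matrix.map_sub _ (map_sub _), Matrix.map_mul, Matrix.map_mul, transpose_map]
  have hform : star v ⬝ᵥ (R - Bᵀ * R * B).map (algebraMap ℝ ℂ) *ᵥ v =
      ((1 - ‖μ‖ ^ 2 : ℝ) : ℂ) * (star v ⬝ᵥ Rc *ᵥ v) := by
    rw [hmap, sub_mulVec, dotProduct_sub, ← mulVec_mulVec, ← mulVec_mulVec,
      dotProduct_mulVec (star v) Bcᴴ, ← star_mulVec, hBv, star_smul, mulVec_smul,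
      smul_dotProduct, dotProduct_smul, smul_smul, RCLike.star_def, Complex.conj_mul']
    push_cast
    ring
  have hpos := hRB.re_star_dotProduct_map_mulVec_pos hv.2
  rw [hform, Complex.re_ofReal_mul] at hpos
  exact (sq_lt_one_iff₀ (norm_nonneg μ)).1 <|
    sub_pos.1 (pos_of_mul_pos_left hpos (hR.re_star_dotProduct_map_mulVec_pos hv.2).le)

end Complexification

section Consensus

variable {ι α : Type*} [Fintype ι] [DecidableEq ι] [Fintype α] [DecidableEq α]
  {κ : ι → Type*} [∀ i, Fintype (κ i)] [∀ i, DecidableEq (κ i)]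

theorem posDef_sub_transpose_mul_mul_blockDiagonalProd {S : Matrix ι ι ℝ} {π : ι → ℝ}
    {W : ∀ i, Matrix α (κ i) ℝ} (hnonneg : ∀ i j, 0 ≤ S i j) (hrow : ∀ i, ∑ j, S i j = 1)
    (hconn : ∀ i j, Relation.TransGen (fun a b => S a b ≠ 0) i j) (hdiag : ∀ i, S i i ≠ 0)
    (hπ : Sᵀ *ᵥ π = π) (hπpos : ∀ i, 0 < π i) (hW : ∀ i, (W i)ᵀ * W i = 1)
    (hjoint : ⨅ i, LinearMap.range (W i).mulVecLin = ⊥) {B : Matrix (Σ i, κ i) (Σ i, κ i) ℝ}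
    (hB : B = (blockDiagonalProd W)ᵀ * (S ⊗ₖ (1 : Matrix α α ℝ)) * blockDiagonalProd W) :
    (diagonal (fun c : Σ i, κ i => π c.1) -
      Bᵀ * diagonal (fun c : Σ i, κ i => π c.1) * B).PosDef := by
  set V := blockDiagonalProd W
  set D := diagonal fun c : Σ i, κ i => π c.1
  set P := diagonal fun p : ι × α => π p.1
  have hVV : Vᵀ * V = 1 := blockDiagonalProd_transpose_mul_self hW
  have hPV : P * V = V * D := diagonal_fst_mul_blockDiagonalProd W π
  have hP : P.PosSemidef := (posDef_diagonal_iff.2 fun p : ι × α => hπpos p.1).posSemidef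
  have hVPV : Vᵀ * P * V = D := blockDiagonalProd_transpose_mul_diagonal_mul hW π
  have hnorm : ∀ z, V *ᵥ z ⬝ᵥ P *ᵥ (V *ᵥ z) = z ⬝ᵥ D *ᵥ z := fun z => by
    rw [← hVPV, ← mulVec_mulVec, ← mulVec_mulVec, dotProduct_mulVec z Vᵀ, vecMul_transpose]
  refine posDef_sub_transpose_mul_mul_of_lt
    (posDef_diagonal_iff.2 fun c : Σ i, κ i => hπpos c.1).isHermitian fun x hx => ?_
  rw [← hnorm x]
  generalize hyx : V *ᵥ x = y
  have hBx : B *ᵥ x = Vᵀ *ᵥ (S ⊗ₖ (1 : Matrix α α ℝ) *ᵥ y) := by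
    rw [hB, ← mulVec_mulVec, ← mulVec_mulVec, hyx]
  have hproj : B *ᵥ x ⬝ᵥ D *ᵥ (B *ᵥ x) ≤
      S ⊗ₖ (1 : Matrix α α ℝ) *ᵥ y ⬝ᵥ P *ᵥ (S ⊗ₖ (1 : Matrix α α ℝ) *ᵥ y) :=
    hBx ▸ dotProduct_transpose_mulVec_le hVV hP hPV _
  have hcontr := dotProduct_kronecker_one_mulVec_le hnonneg hrow hπ (fun i => (hπpos i).le) y
  refine lt_of_le_of_ne (hproj.trans hcontr) fun heq => hx ?_
  have hconst := apply_eq_of_dotProduct_kronecker_one_mulVec_le hnonneg hrow hπ hπpos hconn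
    hdiag (heq ▸ hproj)
  have hy : y = 0 := by
    funext ⟨i, a⟩
    have hmem : (fun b => y (i, b)) ∈ ⨅ j, LinearMap.range (W j).mulVecLin := by
      refine Submodule.mem_iInf _ |>.2 fun j => ⟨fun c => x ⟨j, c⟩, funext fun b => ?_⟩
      rw [mulVecLin_apply, hconst i j b, ← hyx, blockDiagonalProd_mulVec_apply]
    rw [hjoint, Submodule.mem_bot] at hmem
    exact congrFun hmem a
  rw [← one_mulVec x, ← hVV, ← mulVec_mulVec, hyx, hy, mulVec_zero]

end Consensus

theorem stmt13_general {m n : ℕ} {nd : Fin m → ℕ}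
    (S : Matrix (Fin m) (Fin m) ℝ)
    (hnonneg : ∀ i j, 0 ≤ S i j)
    (hrow : ∀ i, ∑ j, S i j = 1)
    (hconn : ∀ i j : Fin m, Relation.TransGen (fun a b => S a b ≠ 0) i j)
    (hdiag : ∀ i, 0 < S i i)
    (pi : Fin m → ℝ) (hpos : ∀ i, 0 < pi i)
    (hPerron : S.transpose.mulVec pi = pi)
    (Sbar Pibar : Matrix (Fin m × Fin n) (Fin m × Fin n) ℝ)
    (hSbar : Sbar = Matrix.kroneckerMap (· * ·) S (1 : Matrix (Fin n) (Fin n) ℝ))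
    (hPibar : Pibar = Matrix.kroneckerMap (· * ·) (Matrix.diagonal pi)
      (1 : Matrix (Fin n) (Fin n) ℝ))
    (Vblk : ∀ i : Fin m, Matrix (Fin n) (Fin (nd i)) ℝ)
    (horth : ∀ i, (Vblk i).transpose * Vblk i = 1)
    (hjoint : (⨅ i : Fin m, LinearMap.range (Vblk i).mulVecLin) = ⊥)
    (V : Matrix (Fin m × Fin n) (Σ i : Fin m, Fin (nd i)) ℝ)
    (hV : ∀ p c, V p c = if h : p.1 = c.1 then Vblk c.1 p.2 c.2 else 0)
    (R B : Matrix (Σ i : Fin m, Fin (nd i)) (Σ i : Fin m, Fin (nd i)) ℝ)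
    (hR : R = V.transpose * Pibar * V)
    (hB : B = V.transpose * Sbar * V) :
    R.PosDef ∧ (R - B.transpose * R * B).PosDef ∧
    ∀ mu : ℂ, mu ∈ spectrum ℂ (B.map (algebraMap ℝ ℂ)) → ‖mu‖ < 1 := by
  obtain rfl : V = blockDiagonalProd Vblk :=
    Matrix.ext fun p c => (hV p c).trans (blockDiagonalProd_apply Vblk p c).symm
  obtain rfl : R = diagonal fun c => pi c.1 := by
    rw [hR, hPibar,
      show kroneckerMap (· * ·) (diagonal pi) 1 = _ from diagonal_kronecker_one pi,
      blockDiagonalProd_transpose_mul_diagonal_mul horth]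
  have hRpd : (diagonal fun c : Σ i, Fin (nd i) => pi c.1).PosDef :=
    posDef_diagonal_iff.2 fun c => hpos c.1
  have hLyap := posDef_sub_transpose_mul_mul_blockDiagonalProd hnonneg hrow hconn
    (fun i => (hdiag i).ne') hPerron hpos horth hjoint (hSbar ▸ hB)
  exact ⟨hRpd, hLyap, fun μ => norm_lt_one_of_mem_spectrum_of_posDef hRpd hLyap⟩

/-- Proposition 1: with `S` irreducible row stochastic with positive diagonal,
`S̄ = S ⊗ Iₙ`, `Π̄ = Π_S ⊗ Iₙ`, and `V = blockdiag(V₁,…,V_m)` with orthonormal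
columns and trivially intersecting column spaces, the matrix `R = VᵀΠ̄V` is
positive definite, `BᵀRB − R` is negative definite for `B = VᵀS̄V`, and `B` has
spectral radius less than one. -/
theorem stmt13 {m n : ℕ} {nd : Fin m → ℕ}
    (S : Matrix (Fin m) (Fin m) ℝ)
    (hnonneg : ∀ i j, 0 ≤ S i j)
    (hrow : ∀ i, ∑ j, S i j = 1)
    (hconn : ∀ i j : Fin m, Relation.TransGen (fun a b => S a b ≠ 0) i j)
    (hdiag : ∀ i, 0 < S i i)
    (pi : Fin m → ℝ) (hpos : ∀ i, 0 < pi i) (hsum : ∑ i, pi i = 1)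
    (hPerron : S.transpose.mulVec pi = pi)
    (Sbar Pibar : Matrix (Fin m × Fin n) (Fin m × Fin n) ℝ)
    (hSbar : Sbar = Matrix.kroneckerMap (· * ·) S (1 : Matrix (Fin n) (Fin n) ℝ))
    (hPibar : Pibar = Matrix.kroneckerMap (· * ·) (Matrix.diagonal pi)
      (1 : Matrix (Fin n) (Fin n) ℝ))
    (Vblk : ∀ i : Fin m, Matrix (Fin n) (Fin (nd i)) ℝ)
    (horth : ∀ i, (Vblk i).transpose * Vblk i = 1)
    (hjoint : (⨅ i : Fin m, LinearMap.range (Vblk i).mulVecLin) = ⊥)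
    (V : Matrix (Fin m × Fin n) (Σ i : Fin m, Fin (nd i)) ℝ)
    (hV : ∀ p c, V p c = if h : p.1 = c.1 then Vblk c.1 p.2 c.2 else 0)
    (R B : Matrix (Σ i : Fin m, Fin (nd i)) (Σ i : Fin m, Fin (nd i)) ℝ)
    (hR : R = V.transpose * Pibar * V)
    (hB : B = V.transpose * Sbar * V) :
    R.PosDef ∧ (R - B.transpose * R * B).PosDef ∧
    ∀ mu : ℂ, mu ∈ spectrum ℂ (B.map (algebraMap ℝ ℂ)) → ‖mu‖ < 1 :=
  stmt13_general S hnonneg hrow hconn hdiag pi hpos hPerron Sbar Pibar hSbar hPibar Vblk horth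
    hjoint V hV R B hR hB
end
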